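/- Fix γ* > 0 and consider the AMP fixed point equations: θ = η(θ + (1/n)X^T r; γ*) and r = y - Xθ + b·r where b = ‖θ‖₀/n < 1. Any solution (θ, r) satisfies: θ is a minimizer of the LASSO cost F(θ') = (1/(2n))‖y - Xθ'‖₂² + λ‖θ'‖₁ with λ = γ*(1 - b). -/
import Mathlib


open Matrix

/-- `‖θ‖₀`: number of nonzero entries. -/
noncomputable def zeroNorm {p : ℕ} (v : Fin p → ℝ) : ℕ :=
  (Finset.univ.filter fun i => v i ≠ 0).card

/-- KKT property of the soft threshold: if `t = η(v; γ)` then `v - t` lies in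
`γ ∂|·|(t)`. -/
lemma soft_kkt (γ v t : ℝ) (hγ : 0 < γ)
    (ht : t = Real.sign v * max (|v| - γ) 0) :
    |v - t| ≤ γ ∧ (v - t) * t = γ * |t| := by
  rcases lt_trichotomy v 0 with hv | hv | hv
  · rw [Real.sign_of_neg hv, abs_of_neg hv] at ht
    rcases le_or_gt (-v) γ with h | h
    · rw [max_eq_right (by linarith)] at ht
      have ht0 : t = 0 := by rw [ht]; ring
      subst ht0
      constructor
      · rw [sub_zero, abs_le]; constructor <;> linarith
      · simp
    · rw [max_eq_left (by linarith)] at ht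
      have ht' : t = v + γ := by rw [ht]; ring
      have htneg : t < 0 := by rw [ht']; linarith
      constructor
      · rw [ht', abs_le]; constructor <;> linarith
      · rw [ht', abs_of_neg (by linarith : v + γ < 0)]; ring
  · subst hv
    simp only [Real.sign_zero, zero_mul] at ht
    subst ht
    constructor
    · simp [hγ.le]
    · simp
  · rw [Real.sign_of_pos hv, abs_of_pos hv] at ht
    rcases le_or_gt v γ with h | h
    · rw [max_eq_right (by linarith)] at ht
      have ht0 : t = 0 := by rw [ht]; ring
      subst ht0
      constructor
      · rw [sub_zero, abs_le]; constructor <;> linarith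
      · simp
    · rw [max_eq_left (by linarith)] at ht
      have ht' : t = v - γ := by rw [ht]; ring
      have htpos : 0 < t := by rw [ht']; linarith
      constructor
      · rw [ht', abs_le]; constructor <;> linarith
      · rw [ht', abs_of_pos (by linarith : (0:ℝ) < v - γ)]; ring

/-- Any fixed point `(θ, r)` of the AMP iteration with threshold
`γ* > 0`, i.e. `θ = η(θ + (1/n)Xᵀ r; γ*)` and `r = y - Xθ + b·r` with
`b = ‖θ‖₀/n < 1`, is a minimizer of the LASSO cost with `λ = γ*(1 - b)`. -/
theorem stmt_17 (n p : ℕ) (hn : 0 < n) (X : Matrix (Fin n) (Fin p) ℝ) (y : Fin n → ℝ)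
    (γstar : ℝ) (hγ : 0 < γstar) (θ : Fin p → ℝ) (r : Fin n → ℝ)
    (η : ℝ → ℝ → ℝ) (hη : ∀ z g, η z g = Real.sign z * max (|z| - g) 0)
    (b : ℝ) (hb : b = (zeroNorm θ : ℝ) / n) (hb1 : b < 1)
    (hfixθ : ∀ i, θ i = η ((θ + (1 / (n : ℝ)) • (Xᵀ *ᵥ r)) i) γstar)
    (hfixr : r = y - X *ᵥ θ + b • r)
    (F : (Fin p → ℝ) → ℝ)
    (hF : ∀ θ', F θ' = (1 / (2 * (n : ℝ))) * (∑ a, (y a - (X *ᵥ θ') a) ^ 2)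
        + (γstar * (1 - b)) * ∑ i, |θ' i|) :
    ∀ θ' : Fin p → ℝ, F θ ≤ F θ' := by
  intro θ'
  have hn' : (0:ℝ) < n := by exact_mod_cast hn
  set s : Fin p → ℝ := fun i => (1 / (n:ℝ)) * (Xᵀ *ᵥ r) i with hs
  -- KKT conditions
  have key : ∀ i, |s i| ≤ γstar ∧ s i * θ i = γstar * |θ i| := by
    intro i
    have h := hfixθ i
    rw [hη] at h
    have hv : (θ + (1 / (n : ℝ)) • (Xᵀ *ᵥ r)) i = θ i + s i := by
      simp [hs, smul_eq_mul]
    rw [hv] at h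
    have := soft_kkt γstar (θ i + s i) (θ i) hγ h
    have hsimp : θ i + s i - θ i = s i := by ring
    rw [hsimp] at this
    exact this
  -- residual identity
  have hr : ∀ a, y a - (X *ᵥ θ) a = (1 - b) * r a := by
    intro a
    have := congrFun hfixr a
    simp only [Pi.add_apply, Pi.sub_apply, Pi.smul_apply, smul_eq_mul] at this
    linarith
  -- swap of sums (adjoint identity)
  have hswap : ∑ a, r a * (X *ᵥ (θ' - θ)) a
      = ∑ i, (Xᵀ *ᵥ r) i * (θ' i - θ i) := by
    simp only [Matrix.mulVec, dotProduct, Matrix.transpose_apply,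
      Pi.sub_apply, Finset.mul_sum, Finset.sum_mul]
    rw [Finset.sum_comm]
    exact Finset.sum_congr rfl fun i _ => Finset.sum_congr rfl fun a _ => by ring
  -- pointwise mulVec difference
  have hXdiff : ∀ a, (X *ᵥ θ') a = (y a - (X *ᵥ θ) a) * (-1) + y a
      - (-(X *ᵥ (θ' - θ)) a) := by
    intro a
    have : X *ᵥ (θ' - θ) = X *ᵥ θ' - X *ᵥ θ := Matrix.mulVec_sub X θ' θ
    have h2 := congrFun this a
    simp only [Pi.sub_apply] at h2
    rw [h2]; ring
  -- expansion of the quadratic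
  have hexp : ∑ a, (y a - (X *ᵥ θ') a) ^ 2
      = ∑ a, (y a - (X *ᵥ θ) a) ^ 2
        - 2 * ∑ a, (y a - (X *ᵥ θ) a) * (X *ᵥ (θ' - θ)) a
        + ∑ a, ((X *ᵥ (θ' - θ)) a) ^ 2 := by
    have hmv : ∀ a, (X *ᵥ θ') a = (X *ᵥ θ) a + (X *ᵥ (θ' - θ)) a := by
      intro a
      have h2 := congrFun (Matrix.mulVec_sub X θ' θ) a
      simp only [Pi.sub_apply] at h2
      linarith
    simp only [Finset.mul_sum, ← Finset.sum_add_distrib, ← Finset.sum_sub_distrib]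
    refine Finset.sum_congr rfl fun a _ => ?_
    rw [hmv a]; ring
  -- cross term
  have hcross : ∑ a, (y a - (X *ᵥ θ) a) * (X *ᵥ (θ' - θ)) a
      = (1 - b) * ((n:ℝ) * ∑ i, s i * (θ' i - θ i)) := by
    have h1 : ∑ a, (y a - (X *ᵥ θ) a) * (X *ᵥ (θ' - θ)) a
        = (1 - b) * ∑ a, r a * (X *ᵥ (θ' - θ)) a := by
      rw [Finset.mul_sum]
      exact Finset.sum_congr rfl fun a _ => by rw [hr a]; ring
    rw [h1, hswap]
    have h2 : ∀ i, (Xᵀ *ᵥ r) i = (n:ℝ) * s i := by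
      intro i; simp only [hs]; field_simp
    have h3 : ∑ i, (Xᵀ *ᵥ r) i * (θ' i - θ i)
        = (n:ℝ) * ∑ i, s i * (θ' i - θ i) := by
      rw [Finset.mul_sum]
      exact Finset.sum_congr rfl fun i _ => by rw [h2 i]; ring
    rw [h3]
  -- per-coordinate nonnegativity
  have hterm : ∀ i, 0 ≤ γstar * |θ' i| - γstar * |θ i| - s i * (θ' i - θ i) := by
    intro i
    obtain ⟨h1, h2⟩ := key i
    have h3 : s i * θ' i ≤ γstar * |θ' i| :=
      calc s i * θ' i ≤ |s i * θ' i| := le_abs_self _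
        _ = |s i| * |θ' i| := abs_mul _ _
        _ ≤ γstar * |θ' i| := mul_le_mul_of_nonneg_right h1 (abs_nonneg _)
    have h4 : s i * (θ' i - θ i) = s i * θ' i - s i * θ i := by ring
    linarith [h2, h3, h4.le, h4.ge]
  have hD : 0 ≤ ∑ i, (γstar * |θ' i| - γstar * |θ i| - s i * (θ' i - θ i)) :=
    Finset.sum_nonneg fun i _ => hterm i
  have hQ : 0 ≤ ∑ a, ((X *ᵥ (θ' - θ)) a) ^ 2 :=
    Finset.sum_nonneg fun a _ => sq_nonneg _
  -- finish
  rw [hF θ, hF θ', hexp, hcross]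
  set U := ∑ i, s i * (θ' i - θ i) with hU
  set Q := ∑ a, ((X *ᵥ (θ' - θ)) a) ^ 2 with hQdef
  set S := ∑ a, (y a - (X *ᵥ θ) a) ^ 2 with hS
  set T := ∑ i, |θ i| with hT
  set T' := ∑ i, |θ' i| with hT'
  have hDsum : ∑ i, (γstar * |θ' i| - γstar * |θ i| - s i * (θ' i - θ i))
      = γstar * T' - γstar * T - U := by
    rw [Finset.sum_sub_distrib, Finset.sum_sub_distrib, ← Finset.mul_sum,
      ← Finset.mul_sum]
  rw [hDsum] at hD
  have hbpos : 0 < 1 - b := by linarith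
  have hDb : 0 ≤ (1 - b) * (γstar * T' - γstar * T - U) :=
    mul_nonneg hbpos.le hD
  have hc : (0:ℝ) < 1 / (2 * (n:ℝ)) := by positivity
  have hcQ : 0 ≤ 1 / (2 * (n:ℝ)) * Q := mul_nonneg hc.le hQ
  have hcn : 1 / (2 * (n:ℝ)) * (2 * (n:ℝ)) = 1 := by field_simp
  have hCU : 1 / (2 * (n:ℝ)) * (2 * ((1 - b) * ((n:ℝ) * U)))
      = (1 - b) * U := by
    have h : 1 / (2 * (n:ℝ)) * (2 * ((1 - b) * ((n:ℝ) * U)))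
        = (1 / (2 * (n:ℝ)) * (2 * (n:ℝ))) * ((1 - b) * U) := by ring
    rw [h, hcn, one_mul]
  nlinarith [hcQ, hDb, hCU]
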